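/- arXiv:math/0111080 — 5 statements merged into one kernel-verified Lean document; each statement's English description precedes it below -/
import Mathlib

section
/- Let E be a finite-dimensional real inner product space, X₁, X₂, Y pairwise orthogonal subspaces, a₁ ∈ X₁, a₂ ∈ X₂, b ∈ Y, π₁(ρ) = P₁ρ + a₂ + b, π₂(ρ) = a₁ + P₂ρ + b (Pᵢ = orthogonal projection onto Xᵢ), i.e. b₁ = b₂ = b (the constraint sets intersect). Let β, γ₁, γ₂ be real with 0 < βγ₂ < 2 and −2 < βγ₁ < 0, let fᵢ(ρ) = (1 + γᵢ)πᵢ(ρ) − γᵢρ and D(ρ) = ρ + β(π₁(f₂(ρ)) − π₂(f₁(ρ))). Then for every ρ = x₁ + x₂ + y with x₁ ∈ X₁, x₂ ∈ X₂, y ∈ Y: Dⁿ(ρ) = a₁ + a₂ + y + (1 − βγ₂)ⁿ(x₁ − a₁) + (1 + βγ₁)ⁿ(x₂ − a₂) for all n, the iterates Dⁿ(ρ) converge to ρ* = a₁ + a₂ + y as n → ∞, and ρ* is a fixed point of D. -/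
/-!
Near a solution the difference map is affine and respects the orthogonal splitting
`E ⊇ X₁ ⊕ X₂ ⊕ Y`: it fixes the `Y`-component (both projections add the same offset `b`,
which cancels) and contracts the `X₁`- and `X₂`-components towards `a₁` and `a₂` by the
factors `1 - βγ₂` and `1 + βγ₁`. Iterating gives the closed form, and
both factors have absolute value `< 1` under the stated bounds on `βγ₁, βγ₂`.
-/

open Filter Topology Submodule

theorem iterate_add_smul_add_smul {R M : Type*} [CommSemiring R] [AddCommMonoid M] [Module R M]
    {T : M → M} {p u v : M} {r₁ r₂ : R}
    (hT : ∀ s t : R, T (p + s • u + t • v) = p + (r₁ * s) • u + (r₂ * t) • v) (n : ℕ) :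
    T^[n] (p + u + v) = p + r₁ ^ n • u + r₂ ^ n • v := by
  induction n with
  | zero => simp
  | succ n ih => rw [Function.iterate_succ_apply', ih, hT, pow_succ', pow_succ']

theorem tendsto_add_pow_smul_add_pow_smul {M : Type*} [NormedAddCommGroup M] [NormedSpace ℝ M]
    {r₁ r₂ : ℝ} (h₁ : |r₁| < 1) (h₂ : |r₂| < 1) (p u v : M) :
    Tendsto (fun n : ℕ => p + r₁ ^ n • u + r₂ ^ n • v) atTop (𝓝 p) := by
  have hu := (tendsto_pow_atTop_nhds_zero_of_abs_lt_one h₁).smul_const u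
  have hv := (tendsto_pow_atTop_nhds_zero_of_abs_lt_one h₂).smul_const v
  simpa using (tendsto_const_nhds.add hu).add hv

section ThreeSubspaces

variable {E : Type*} [NormedAddCommGroup E] [InnerProductSpace ℝ E] {X₁ X₂ Y : Submodule ℝ E}
  {x₁ x₂ y : E}

theorem orthogonalProjectionOnto_add_add_left [X₁.HasOrthogonalProjection]
    (h₁₂ : X₁ ⟂ X₂) (h₁Y : X₁ ⟂ Y) (hx₁ : x₁ ∈ X₁) (hx₂ : x₂ ∈ X₂) (hy : y ∈ Y) :
    (X₁.orthogonalProjectionOnto (x₁ + x₂ + y) : E) = x₁ :=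
  X₁.eq_starProjection_of_mem_orthogonal' hx₁ (add_mem (h₁₂.symm.le hx₂) (h₁Y.symm.le hy))
    (add_assoc _ _ _)

theorem orthogonalProjectionOnto_add_add_middle [X₂.HasOrthogonalProjection]
    (h₁₂ : X₁ ⟂ X₂) (h₂Y : X₂ ⟂ Y) (hx₁ : x₁ ∈ X₁) (hx₂ : x₂ ∈ X₂) (hy : y ∈ Y) :
    (X₂.orthogonalProjectionOnto (x₁ + x₂ + y) : E) = x₂ :=
  X₂.eq_starProjection_of_mem_orthogonal' hx₂ (add_mem (h₁₂.le hx₁) (h₂Y.symm.le hy))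
    (by abel)

theorem difference_map_apply_add_add [X₁.HasOrthogonalProjection] [X₂.HasOrthogonalProjection]
    (h₁₂ : X₁ ⟂ X₂) (h₁Y : X₁ ⟂ Y) (h₂Y : X₂ ⟂ Y)
    {a₁ a₂ b : E} (ha₁ : a₁ ∈ X₁) (ha₂ : a₂ ∈ X₂) (hb : b ∈ Y) {π₁ π₂ f₁ f₂ D : E → E}
    {β γ₁ γ₂ : ℝ}
    (hπ₁ : ∀ ρ, π₁ ρ = (X₁.orthogonalProjectionOnto ρ : E) + a₂ + b)
    (hπ₂ : ∀ ρ, π₂ ρ = a₁ + (X₂.orthogonalProjectionOnto ρ : E) + b)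
    (hf₁ : ∀ ρ, f₁ ρ = (1 + γ₁) • π₁ ρ - γ₁ • ρ)
    (hf₂ : ∀ ρ, f₂ ρ = (1 + γ₂) • π₂ ρ - γ₂ • ρ)
    (hD : ∀ ρ, D ρ = ρ + β • (π₁ (f₂ ρ) - π₂ (f₁ ρ)))
    (hx₁ : x₁ ∈ X₁) (hx₂ : x₂ ∈ X₂) (hy : y ∈ Y) :
    D (x₁ + x₂ + y) = a₁ + a₂ + y + (1 - β * γ₂) • (x₁ - a₁) + (1 + β * γ₁) • (x₂ - a₂) := by
  have hf₁ρ : f₁ (x₁ + x₂ + y) = x₁ + ((1 + γ₁) • a₂ - γ₁ • x₂) + ((1 + γ₁) • b - γ₁ • y) := by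
    rw [hf₁, hπ₁, orthogonalProjectionOnto_add_add_left h₁₂ h₁Y hx₁ hx₂ hy]
    module
  have hf₂ρ : f₂ (x₁ + x₂ + y) = ((1 + γ₂) • a₁ - γ₂ • x₁) + x₂ + ((1 + γ₂) • b - γ₂ • y) := by
    rw [hf₂, hπ₂, orthogonalProjectionOnto_add_add_middle h₁₂ h₂Y hx₁ hx₂ hy]
    module
  have hY : ∀ γ : ℝ, (1 + γ) • b - γ • y ∈ Y := fun γ =>
    sub_mem (smul_mem _ _ hb) (smul_mem _ _ hy)
  rw [hD, hf₁ρ, hf₂ρ, hπ₁, hπ₂,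
    orthogonalProjectionOnto_add_add_left h₁₂ h₁Y
      (sub_mem (smul_mem _ _ ha₁) (smul_mem _ _ hx₁)) hx₂ (hY γ₂),
    orthogonalProjectionOnto_add_add_middle h₁₂ h₂Y
      hx₁ (sub_mem (smul_mem _ _ ha₂) (smul_mem _ _ hx₂)) (hY γ₁)]
  module

end ThreeSubspaces

/-- When the constraint sets intersect (`b₁ = b₂ = b`) and `0 < βγ₂ < 2`,
`−2 < βγ₁ < 0`, the difference map iterates converge geometrically to the fixed
point `ρ* = a₁ + a₂ + y`. -/
theorem difference_map_local_convergence
    {E : Type*} [NormedAddCommGroup E] [InnerProductSpace ℝ E] [FiniteDimensional ℝ E]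
    (X₁ X₂ Y : Submodule ℝ E)
    (hX₁X₂ : ∀ u ∈ X₁, ∀ v ∈ X₂, inner (𝕜 := ℝ) u v = 0)
    (hX₁Y : ∀ u ∈ X₁, ∀ v ∈ Y, inner (𝕜 := ℝ) u v = 0)
    (hX₂Y : ∀ u ∈ X₂, ∀ v ∈ Y, inner (𝕜 := ℝ) u v = 0)
    (a₁ : E) (ha₁ : a₁ ∈ X₁) (a₂ : E) (ha₂ : a₂ ∈ X₂)
    (b : E) (hb : b ∈ Y)
    (π₁ π₂ : E → E)
    (hπ₁ : ∀ ρ, π₁ ρ = (X₁.orthogonalProjectionOnto ρ : E) + a₂ + b)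
    (hπ₂ : ∀ ρ, π₂ ρ = a₁ + (X₂.orthogonalProjectionOnto ρ : E) + b)
    (β γ₁ γ₂ : ℝ)
    (hβγ₂ : 0 < β * γ₂) (hβγ₂' : β * γ₂ < 2)
    (hβγ₁ : -2 < β * γ₁) (hβγ₁' : β * γ₁ < 0)
    (f₁ f₂ : E → E)
    (hf₁ : ∀ ρ, f₁ ρ = (1 + γ₁) • π₁ ρ - γ₁ • ρ)
    (hf₂ : ∀ ρ, f₂ ρ = (1 + γ₂) • π₂ ρ - γ₂ • ρ)
    (D : E → E) (hD : ∀ ρ, D ρ = ρ + β • (π₁ (f₂ ρ) - π₂ (f₁ ρ))) :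
    ∀ x₁ ∈ X₁, ∀ x₂ ∈ X₂, ∀ y ∈ Y,
      (∀ n : ℕ, D^[n] (x₁ + x₂ + y) = a₁ + a₂ + y
        + (1 - β * γ₂) ^ n • (x₁ - a₁) + (1 + β * γ₁) ^ n • (x₂ - a₂)) ∧
      Filter.Tendsto (fun n : ℕ => D^[n] (x₁ + x₂ + y))
        Filter.atTop (nhds (a₁ + a₂ + y)) ∧
      D (a₁ + a₂ + y) = a₁ + a₂ + y := by
  intro x₁ hx₁ x₂ hx₂ y hy
  have step {x₁ x₂ : E} (hx₁ : x₁ ∈ X₁) (hx₂ : x₂ ∈ X₂) :=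
    difference_map_apply_add_add (isOrtho_iff_inner_eq.2 hX₁X₂) (isOrtho_iff_inner_eq.2 hX₁Y)
      (isOrtho_iff_inner_eq.2 hX₂Y) ha₁ ha₂ hb hπ₁ hπ₂ hf₁ hf₂ hD hx₁ hx₂ hy
  have hT : ∀ s t : ℝ, D (a₁ + a₂ + y + s • (x₁ - a₁) + t • (x₂ - a₂)) =
      a₁ + a₂ + y + ((1 - β * γ₂) * s) • (x₁ - a₁) + ((1 + β * γ₁) * t) • (x₂ - a₂) := by
    intro s t
    rw [show a₁ + a₂ + y + s • (x₁ - a₁) + t • (x₂ - a₂) =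
        (a₁ + s • (x₁ - a₁)) + (a₂ + t • (x₂ - a₂)) + y by abel,
      step (add_mem ha₁ (smul_mem _ _ (sub_mem hx₁ ha₁)))
        (add_mem ha₂ (smul_mem _ _ (sub_mem hx₂ ha₂)))]
    module
  have hiter (n : ℕ) : D^[n] (x₁ + x₂ + y) =
      a₁ + a₂ + y + (1 - β * γ₂) ^ n • (x₁ - a₁) + (1 + β * γ₁) ^ n • (x₂ - a₂) := by
    rw [show x₁ + x₂ + y = a₁ + a₂ + y + (x₁ - a₁) + (x₂ - a₂) by abel]
    exact iterate_add_smul_add_smul hT n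
  refine ⟨hiter, ?_, by simpa using hT 0 0⟩
  simp only [hiter]
  exact tendsto_add_pow_smul_add_pow_smul (abs_sub_lt_iff.2 ⟨by linarith, by linarith⟩)
    (abs_lt.2 ⟨by linarith, by linarith⟩) _ _ _
end

section
/- Let E be a finite-dimensional real inner product space, X₁, X₂, Y pairwise orthogonal subspaces, a₁ ∈ X₁, a₂ ∈ X₂, b ∈ Y, π₁(ρ) = P₁ρ + a₂ + b, π₂(ρ) = a₁ + P₂ρ + b (Pᵢ = orthogonal projection onto Xᵢ). Let β ≠ 0 and take the optimal parameters γ₂ = β⁻¹, γ₁ = −β⁻¹, with fᵢ(ρ) = (1 + γᵢ)πᵢ(ρ) − γᵢρ and D(ρ) = ρ + β(π₁(f₂(ρ)) − π₂(f₁(ρ))). Then for every ρ = x₁ + x₂ + y with x₁ ∈ X₁, x₂ ∈ X₂, y ∈ Y: (i) D(ρ) = a₁ + a₂ + y, so convergence to a fixed point occurs in a single iteration; and (ii) (π₁ ∘ f₂)(a₁ + a₂ + y) = a₁ + a₂ + b, which lies in C₁ ∩ C₂, where C₁ = {x + a₂ + b : x ∈ X₁} and C₂ = {a₁ + x + b :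 x ∈ X₂}. Hence the solution is recovered from the fixed point by one application of π₁ ∘ f₂. -/
/-!
By orthogonality, `π₁ ∘ f₂` sees only the `X₁`-component of `ρ = x₁ + x₂ + y` and returns
`(1 + γ₂) a₁ - γ₂ x₁ + a₂ + b`; symmetrically `π₂ ∘ f₁` returns `a₁ + (1 + γ₁) a₂ - γ₁ x₂ + b`.
Hence `D ρ = ρ + β (γ₂ (a₁ - x₁) - γ₁ (a₂ - x₂))`, and `γ₂ = -γ₁ = β⁻¹` is exactly the choice
that replaces `x₁, x₂` by `a₁, a₂` while keeping `y`. At such a point, `x₁ = a₁` turns the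
formula for `π₁ ∘ f₂` into `a₁ + a₂ + b`.
-/

open Submodule

namespace Submodule

variable {𝕜 E : Type*} [RCLike 𝕜] [NormedAddCommGroup E] [InnerProductSpace 𝕜 E]
  {X Z Y : Submodule 𝕜 E} [X.HasOrthogonalProjection]

theorem starProjection_add_add_left (hXZ : X ⟂ Z) (hXY : X ⟂ Y) {x z y : E}
    (hx : x ∈ X) (hz : z ∈ Z) (hy : y ∈ Y) : X.starProjection (x + z + y) = x :=
  eq_starProjection_of_mem_orthogonal' hx (add_mem (hXZ.ge hz) (hXY.ge hy)) (add_assoc x z y)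

theorem starProjection_add_add_middle (hXZ : X ⟂ Z) (hXY : X ⟂ Y) {x z y : E}
    (hx : x ∈ X) (hz : z ∈ Z) (hy : y ∈ Y) : X.starProjection (z + x + y) = x := by
  rw [add_comm z x, starProjection_add_add_left hXZ hXY hx hz hy]

variable [Z.HasOrthogonalProjection] {a b : E}

theorem starProjection_smul_add_starProjection_add_sub_smul (hXZ : X ⟂ Z) (hXY : X ⟂ Y)
    (ha : a ∈ X) (hb : b ∈ Y) (c d : 𝕜) (ρ : E) :
    X.starProjection (c • (a + Z.starProjection ρ + b) - d • ρ) =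
      c • a - d • X.starProjection ρ := by
  rw [map_sub, map_smul, map_smul,
    starProjection_add_add_left hXZ hXY ha (Z.starProjection_apply_mem ρ) hb]

theorem starProjection_smul_starProjection_add_add_sub_smul (hXZ : X ⟂ Z) (hXY : X ⟂ Y)
    (ha : a ∈ X) (hb : b ∈ Y) (c d : 𝕜) (ρ : E) :
    X.starProjection (c • (Z.starProjection ρ + a + b) - d • ρ) =
      c • a - d • X.starProjection ρ := by
  rw [map_sub, map_smul, map_smul,
    starProjection_add_add_middle hXZ hXY ha (Z.starProjection_apply_mem ρ) hb]

end Submodule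

/-- With the optimal parameters `γ₂ = β⁻¹`, `γ₁ = −β⁻¹` and intersecting constraint
sets, the difference map converges in a single iteration to `a₁ + a₂ + y`, and one
application of `π₁ ∘ f₂` to the fixed point recovers the solution `a₁ + a₂ + b ∈ C₁ ∩ C₂`. -/
theorem difference_map_optimal_parameters_one_step
    {E : Type*} [NormedAddCommGroup E] [InnerProductSpace ℝ E] [FiniteDimensional ℝ E]
    (X₁ X₂ Y : Submodule ℝ E)
    (hX₁X₂ : ∀ u ∈ X₁, ∀ v ∈ X₂, inner (𝕜 := ℝ) u v = 0)
    (hX₁Y : ∀ u ∈ X₁, ∀ v ∈ Y, inner (𝕜 := ℝ) u v = 0)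
    (hX₂Y : ∀ u ∈ X₂, ∀ v ∈ Y, inner (𝕜 := ℝ) u v = 0)
    (a₁ : E) (ha₁ : a₁ ∈ X₁) (a₂ : E) (ha₂ : a₂ ∈ X₂)
    (b : E) (hb : b ∈ Y)
    (π₁ π₂ : E → E)
    (hπ₁ : ∀ ρ, π₁ ρ = (Submodule.orthogonalProjectionOnto X₁ ρ : E) + a₂ + b)
    (hπ₂ : ∀ ρ, π₂ ρ = a₁ + (Submodule.orthogonalProjectionOnto X₂ ρ : E) + b)
    (β : ℝ) (hβ : β ≠ 0) (γ₁ γ₂ : ℝ) (hγ₂ : γ₂ = β⁻¹) (hγ₁ : γ₁ = -β⁻¹)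
    (f₁ f₂ : E → E)
    (hf₁ : ∀ ρ, f₁ ρ = (1 + γ₁) • π₁ ρ - γ₁ • ρ)
    (hf₂ : ∀ ρ, f₂ ρ = (1 + γ₂) • π₂ ρ - γ₂ • ρ)
    (D : E → E) (hD : ∀ ρ, D ρ = ρ + β • (π₁ (f₂ ρ) - π₂ (f₁ ρ)))
    (C₁ C₂ : Set E)
    (hC₁ : C₁ = {z | ∃ x ∈ X₁, z = x + a₂ + b})
    (hC₂ : C₂ = {z | ∃ x ∈ X₂, z = a₁ + x + b}) :
    ∀ x₁ ∈ X₁, ∀ x₂ ∈ X₂, ∀ y ∈ Y,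
      D (x₁ + x₂ + y) = a₁ + a₂ + y ∧
      π₁ (f₂ (a₁ + a₂ + y)) = a₁ + a₂ + b ∧
      a₁ + a₂ + b ∈ C₁ ∩ C₂ := by
  intro x₁ hx₁ x₂ hx₂ y hy
  have h₁₂ : X₁ ⟂ X₂ := isOrtho_iff_inner_eq.mpr hX₁X₂
  have h₁Y : X₁ ⟂ Y := isOrtho_iff_inner_eq.mpr hX₁Y
  have h₂Y : X₂ ⟂ Y := isOrtho_iff_inner_eq.mpr hX₂Y
  have hπ₁f₂ (ρ : E) : π₁ (f₂ ρ) = (1 + γ₂) • a₁ - γ₂ • X₁.starProjection ρ + a₂ + b := by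
    simp only [hf₂, hπ₁, hπ₂, coe_orthogonalProjectionOnto_apply,
      starProjection_smul_add_starProjection_add_sub_smul h₁₂ h₁Y ha₁ hb]
  have hπ₂f₁ (ρ : E) : π₂ (f₁ ρ) = a₁ + ((1 + γ₁) • a₂ - γ₁ • X₂.starProjection ρ) + b := by
    simp only [hf₁, hπ₁, hπ₂, coe_orthogonalProjectionOnto_apply,
      starProjection_smul_starProjection_add_add_sub_smul h₁₂.symm h₂Y ha₂ hb]
  refine ⟨?_, ?_, ?_⟩
  · have hdiff : π₁ (f₂ (x₁ + x₂ + y)) - π₂ (f₁ (x₁ + x₂ + y)) = β⁻¹ • (a₁ - x₁ + a₂ - x₂) := by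
      rw [hπ₁f₂, hπ₂f₁, starProjection_add_add_left h₁₂ h₁Y hx₁ hx₂ hy,
        starProjection_add_add_middle h₁₂.symm h₂Y hx₂ hx₁ hy, hγ₁, hγ₂]
      module
    rw [hD, hdiff, smul_inv_smul₀ hβ]
    abel
  · rw [hπ₁f₂, starProjection_add_add_left h₁₂ h₁Y ha₁ ha₂ hy]
    module
  · rw [hC₁, hC₂]
    exact ⟨⟨a₁, ha₁, rfl⟩, ⟨a₂, ha₂, rfl⟩⟩
end

section
/- Let E be a finite-dimensional real inner product space, X₁, X₂, Y pairwise orthogonal subspaces, a₁ ∈ X₁, a₂ ∈ X₂, b₁, b₂ ∈ Y, π₁(ρ) = P₁ρ + a₂ + b₁, π₂(ρ) = a₁ + P₂ρ + b₂ (Pᵢ = orthogonal projection onto Xᵢ). Let β ≠ 0, γ₂ = β⁻¹, γ₁ = −β⁻¹, fᵢ(ρ) = (1 + γᵢ)πᵢ(ρ) − γᵢρ, and D(ρ) = ρ + β(π₁(f₂(ρ)) − π₂(f₁(ρ))). Then for every ρ = x₁ + x₂ + y with x₁ ∈ X₁, x₂ ∈ X₂, y ∈ Y and every n ≥ 1: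 Dⁿ(ρ) = a₁ + a₂ + y + nβ(b₁ − b₂). In particular, if b₁ ≠ b₂ (the constraint sets do not intersect, a 'trap'), the iterates move away uniformly along the minimum-separation axis b₁ − b₂ and ‖Dⁿ(ρ)‖ → ∞; the difference map does not stagnate at a trap. -/
/-! With `γ₂ = β⁻¹` and `γ₁ = -β⁻¹` the difference map of the affine model collapses to
`D ρ = a₁ + a₂ + (ρ - P₁ ρ - P₂ ρ) + β • (b₁ - b₂)`: one step resets the `X₁`- and
`X₂`-components to `a₁` and `a₂`, and translates the component orthogonal to `X₁ ⊔ X₂` by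
`β • (b₁ - b₂)`. From the first step on, the iterates therefore move by this fixed vector, and
their norms grow linearly when `b₁ ≠ b₂`. -/

open Filter Submodule

section DifferenceMap

variable {E : Type*} [AddCommGroup E] [Module ℝ E]

def relaxedMap (π : E → E) (γ : ℝ) (ρ : E) : E := (1 + γ) • π ρ - γ • ρ

def differenceMap (π₁ π₂ : E → E) (β γ₁ γ₂ : ℝ) (ρ : E) : E :=
  ρ + β • (π₁ (relaxedMap π₂ γ₂ ρ) - π₂ (relaxedMap π₁ γ₁ ρ))

end DifferenceMap

section AffineTrap

variable {E : Type*} [NormedAddCommGroup E] [InnerProductSpace ℝ E]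
  {X₁ X₂ : Submodule ℝ E} [X₁.HasOrthogonalProjection] [X₂.HasOrthogonalProjection]
  {a₁ a₂ b₁ b₂ : E}

theorem differenceMap_affine_apply (h : X₁ ⟂ X₂) (ha₁ : a₁ ∈ X₁) (ha₂ : a₂ ∈ X₂)
    (hb₁ : b₁ ∈ X₂ᗮ) (hb₂ : b₂ ∈ X₁ᗮ) (β γ₁ γ₂ : ℝ) (ρ : E) :
    differenceMap (fun ρ ↦ X₁.starProjection ρ + a₂ + b₁)
        (fun ρ ↦ a₁ + X₂.starProjection ρ + b₂) β γ₁ γ₂ ρ =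
      ρ + β • (γ₂ • (a₁ - X₁.starProjection ρ) - γ₁ • (a₂ - X₂.starProjection ρ)
        + (b₁ - b₂)) := by
  have hP₁a₁ : X₁.starProjection a₁ = a₁ := starProjection_eq_self_iff.mpr ha₁
  have hP₂a₂ : X₂.starProjection a₂ = a₂ := starProjection_eq_self_iff.mpr ha₂
  have hP₁b₂ : X₁.starProjection b₂ = 0 := (X₁.starProjection_apply_eq_zero_iff).mpr hb₂
  have hP₂b₁ : X₂.starProjection b₁ = 0 := (X₂.starProjection_apply_eq_zero_iff).mpr hb₁
  have hP₁P₂ : X₁.starProjection (X₂.starProjection ρ) = 0 :=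
    (X₁.starProjection_apply_eq_zero_iff).mpr (h.ge (X₂.starProjection_apply_mem ρ))
  have hP₂P₁ : X₂.starProjection (X₁.starProjection ρ) = 0 :=
    (X₂.starProjection_apply_eq_zero_iff).mpr (h.le (X₁.starProjection_apply_mem ρ))
  simp only [differenceMap, relaxedMap, map_sub, map_add, map_smul, hP₁a₁, hP₂a₂, hP₁b₂, hP₂b₁,
    hP₁P₂, hP₂P₁]
  module

theorem differenceMap_affine_apply_of_optimal (h : X₁ ⟂ X₂) (ha₁ : a₁ ∈ X₁) (ha₂ : a₂ ∈ X₂)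
    (hb₁ : b₁ ∈ X₂ᗮ) (hb₂ : b₂ ∈ X₁ᗮ) {β : ℝ} (hβ : β ≠ 0) (ρ : E) :
    differenceMap (fun ρ ↦ X₁.starProjection ρ + a₂ + b₁)
        (fun ρ ↦ a₁ + X₂.starProjection ρ + b₂) β (-β⁻¹) β⁻¹ ρ =
      a₁ + a₂ + (ρ - X₁.starProjection ρ - X₂.starProjection ρ) + β • (b₁ - b₂) := by
  rw [differenceMap_affine_apply h ha₁ ha₂ hb₁ hb₂]
  match_scalars <;> field_simp

theorem sub_starProjection_sub_starProjection_add_add (h : X₁ ⟂ X₂) {x₁ x₂ y : E}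
    (hx₁ : x₁ ∈ X₁) (hx₂ : x₂ ∈ X₂) (hy : y ∈ (X₁ ⊔ X₂)ᗮ) :
    x₁ + x₂ + y - X₁.starProjection (x₁ + x₂ + y) - X₂.starProjection (x₁ + x₂ + y) = y := by
  rw [← inf_orthogonal] at hy
  have hP₁ : X₁.starProjection (x₁ + x₂ + y) = x₁ :=
    eq_starProjection_of_mem_orthogonal' hx₁ (add_mem (h.ge hx₂) hy.1) (add_assoc _ _ _)
  have hP₂ : X₂.starProjection (x₁ + x₂ + y) = x₂ :=
    eq_starProjection_of_mem_orthogonal' hx₂ (add_mem (h.le hx₁) hy.2) (by abel)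
  rw [hP₁, hP₂]
  abel

theorem differenceMap_affine_add_add_of_optimal (h : X₁ ⟂ X₂) (ha₁ : a₁ ∈ X₁) (ha₂ : a₂ ∈ X₂)
    (hb₁ : b₁ ∈ (X₁ ⊔ X₂)ᗮ) (hb₂ : b₂ ∈ (X₁ ⊔ X₂)ᗮ) {β : ℝ} (hβ : β ≠ 0) {x₁ x₂ y : E}
    (hx₁ : x₁ ∈ X₁) (hx₂ : x₂ ∈ X₂) (hy : y ∈ (X₁ ⊔ X₂)ᗮ) :
    differenceMap (fun ρ ↦ X₁.starProjection ρ + a₂ + b₁)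
        (fun ρ ↦ a₁ + X₂.starProjection ρ + b₂) β (-β⁻¹) β⁻¹ (x₁ + x₂ + y) =
      a₁ + a₂ + y + β • (b₁ - b₂) := by
  rw [differenceMap_affine_apply_of_optimal h ha₁ ha₂ (orthogonal_le le_sup_right hb₁)
    (orthogonal_le le_sup_left hb₂) hβ, sub_starProjection_sub_starProjection_add_add h hx₁ hx₂ hy]

theorem differenceMap_affine_iterate_of_optimal (h : X₁ ⟂ X₂) (ha₁ : a₁ ∈ X₁) (ha₂ : a₂ ∈ X₂)
    (hb₁ : b₁ ∈ (X₁ ⊔ X₂)ᗮ) (hb₂ : b₂ ∈ (X₁ ⊔ X₂)ᗮ) {β : ℝ} (hβ : β ≠ 0) {x₁ x₂ y : E}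
    (hx₁ : x₁ ∈ X₁) (hx₂ : x₂ ∈ X₂) (hy : y ∈ (X₁ ⊔ X₂)ᗮ) {n : ℕ} (hn : 1 ≤ n) :
    (differenceMap (fun ρ ↦ X₁.starProjection ρ + a₂ + b₁)
        (fun ρ ↦ a₁ + X₂.starProjection ρ + b₂) β (-β⁻¹) β⁻¹)^[n] (x₁ + x₂ + y) =
      a₁ + a₂ + y + ((n : ℝ) * β) • (b₁ - b₂) := by
  induction n, hn using Nat.le_induction with
  | base =>
    simpa using differenceMap_affine_add_add_of_optimal h ha₁ ha₂ hb₁ hb₂ hβ hx₁ hx₂ hy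
  | succ n _ ih =>
    have hy' : y + ((n : ℝ) * β) • (b₁ - b₂) ∈ (X₁ ⊔ X₂)ᗮ :=
      add_mem hy (smul_mem _ _ (sub_mem hb₁ hb₂))
    rw [Function.iterate_succ_apply', ih, add_assoc (a₁ + a₂),
      differenceMap_affine_add_add_of_optimal h ha₁ ha₂ hb₁ hb₂ hβ ha₁ ha₂ hy']
    push_cast
    module

end AffineTrap

theorem tendsto_norm_add_natCast_smul_atTop {F : Type*} [NormedAddCommGroup F] [NormedSpace ℝ F]
    (c : F) {v : F} (hv : v ≠ 0) : Tendsto (fun n : ℕ ↦ ‖c + (n : ℝ) • v‖) atTop atTop := by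
  have hlin : Tendsto (fun n : ℕ ↦ n * ‖v‖ - ‖c‖) atTop atTop :=
    tendsto_atTop_add_const_right _ _ <|
      tendsto_natCast_atTop_atTop.atTop_mul_const (norm_pos_iff.mpr hv)
  refine tendsto_atTop_mono (fun n ↦ ?_) hlin
  have := norm_le_add_norm_add' c ((n : ℝ) • v)
  rw [norm_smul, Real.norm_natCast] at this
  linarith

/-- At a trap (`b₁ ≠ b₂`), with optimal parameters, the difference map iterates move
uniformly along the minimum-separation axis: `Dⁿρ = a₁ + a₂ + y + nβ(b₁ − b₂)` for
`n ≥ 1`, and the norms of the iterates tend to infinity; there is no stagnation. -/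
theorem difference_map_escapes_traps
    {E : Type*} [NormedAddCommGroup E] [InnerProductSpace ℝ E] [FiniteDimensional ℝ E]
    (X₁ X₂ Y : Submodule ℝ E)
    (hX₁X₂ : ∀ u ∈ X₁, ∀ v ∈ X₂, inner (𝕜 := ℝ) u v = 0)
    (hX₁Y : ∀ u ∈ X₁, ∀ v ∈ Y, inner (𝕜 := ℝ) u v = 0)
    (hX₂Y : ∀ u ∈ X₂, ∀ v ∈ Y, inner (𝕜 := ℝ) u v = 0)
    (a₁ : E) (ha₁ : a₁ ∈ X₁) (a₂ : E) (ha₂ : a₂ ∈ X₂)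
    (b₁ b₂ : E) (hb₁ : b₁ ∈ Y) (hb₂ : b₂ ∈ Y)
    (π₁ π₂ : E → E)
    (hπ₁ : ∀ ρ, π₁ ρ = (Submodule.orthogonalProjectionOnto X₁ ρ : E) + a₂ + b₁)
    (hπ₂ : ∀ ρ, π₂ ρ = a₁ + (Submodule.orthogonalProjectionOnto X₂ ρ : E) + b₂)
    (β : ℝ) (hβ : β ≠ 0) (γ₁ γ₂ : ℝ) (hγ₂ : γ₂ = β⁻¹) (hγ₁ : γ₁ = -β⁻¹)
    (f₁ f₂ : E → E)
    (hf₁ : ∀ ρ, f₁ ρ = (1 + γ₁) • π₁ ρ - γ₁ • ρ)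
    (hf₂ : ∀ ρ, f₂ ρ = (1 + γ₂) • π₂ ρ - γ₂ • ρ)
    (D : E → E) (hD : ∀ ρ, D ρ = ρ + β • (π₁ (f₂ ρ) - π₂ (f₁ ρ))) :
    ∀ x₁ ∈ X₁, ∀ x₂ ∈ X₂, ∀ y ∈ Y,
      (∀ n : ℕ, 1 ≤ n →
        D^[n] (x₁ + x₂ + y) = a₁ + a₂ + y + ((n : ℝ) * β) • (b₁ - b₂)) ∧
      (b₁ ≠ b₂ →
        Filter.Tendsto (fun n : ℕ => ‖D^[n] (x₁ + x₂ + y)‖)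
          Filter.atTop Filter.atTop) := by
  intro x₁ hx₁ x₂ hx₂ y hy
  obtain rfl : D = differenceMap π₁ π₂ β γ₁ γ₂ := funext fun ρ ↦ by
    rw [hD, hf₁, hf₂]; rfl
  obtain rfl : π₁ = fun ρ ↦ X₁.starProjection ρ + a₂ + b₁ := funext hπ₁
  obtain rfl : π₂ = fun ρ ↦ a₁ + X₂.starProjection ρ + b₂ := funext hπ₂
  subst hγ₁ hγ₂
  have hortho : X₁ ⟂ X₂ := isOrtho_iff_inner_eq.mpr hX₁X₂
  have hY : Y ≤ (X₁ ⊔ X₂)ᗮ :=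
    (isOrtho_sup_left.mpr ⟨isOrtho_iff_inner_eq.mpr hX₁Y, isOrtho_iff_inner_eq.mpr hX₂Y⟩).ge
  have hiter : ∀ n : ℕ, 1 ≤ n → _ := fun n hn ↦
    differenceMap_affine_iterate_of_optimal hortho ha₁ ha₂ (hY hb₁) (hY hb₂) hβ hx₁ hx₂ (hY hy) hn
  refine ⟨hiter, fun hb ↦ ?_⟩
  have hstep : β • (b₁ - b₂) ≠ 0 := smul_ne_zero hβ (sub_ne_zero.mpr hb)
  refine (tendsto_norm_add_natCast_smul_atTop (a₁ + a₂ + y) hstep).congr' ?_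
  filter_upwards [eventually_ge_atTop 1] with n hn
  rw [hiter n hn, mul_smul]
end

section
/- Let N be a natural number, S a subset of Fin N, π₁ = π_supp the support projection on ℝ^N (π₁(ρ)ₙ = ρₙ for n ∈ S, 0 otherwise), and π₂ : ℝ^N → ℝ^N an arbitrary map (the Fourier modulus projection). Take β = 1 with the optimal parameters γ₂ = β⁻¹ = 1, γ₁ = −β⁻¹ = −1, fᵢ(ρ) = (1 + γᵢ)πᵢ(ρ) − γᵢρ, and D(ρ) = ρ + β(π₁(f₂(ρ)) − π₂(f₁(ρ))). Then for every ρ and every n: D(ρ)ₙ = π₂(ρ)ₙ if n ∈ S, and D(ρ)ₙ = ρₙ − π₂(ρ)ₙ if n ∉ S. That is, the difference map with β = 1 and support constraints reproduces Fienup's hybrid input-output map with Fienup parameter 1. -/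
/-! At `β = 1` the optimal parameters make `f₁` the identity and `f₂ = 2π₂ − id` the reflection
through `π₂`, so `D ρ = ρ + π₁(2 π₂ ρ − ρ) − π₂ ρ`. With `π₁` the support projection this reads
`2 π₂ ρ − π₂ ρ = π₂ ρ` on `S` and `ρ − π₂ ρ` off `S`. -/

section Relaxation

variable {R E : Type*} [Ring R] [AddCommGroup E] [Module R E]

theorem relaxation_neg_one (x ρ : E) : (1 + -1 : R) • x - (-1 : R) • ρ = ρ := by
  simp

theorem relaxation_one (x ρ : E) : (1 + 1 : R) • x - (1 : R) • ρ = (2 : R) • x - ρ := by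
  rw [one_add_one_eq_two, one_smul]

end Relaxation

theorem add_supportProj_reflection_sub_apply {ι R : Type*} [Ring R] (S : Set ι)
    [DecidablePred (· ∈ S)] (π : (ι → R) → (ι → R))
    (hπ : ∀ ρ n, π ρ n = if n ∈ S then ρ n else 0) (ρ p : ι → R) (n : ι) :
    (ρ + π ((2 : R) • p - ρ) - p) n = if n ∈ S then p n else ρ n - p n := by
  simp only [Pi.add_apply, Pi.sub_apply, hπ, Pi.smul_apply, smul_eq_mul]
  split_ifs <;> noncomm_ring

/-- With support constraints and `β = 1` (optimal parameters `γ₂ = 1`, `γ₁ = −1`),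
the difference map reproduces Fienup's hybrid input-output map with Fienup parameter 1. -/
theorem difference_map_beta_one_is_hybrid_input_output
    (N : ℕ) (S : Set (Fin N)) [DecidablePred (· ∈ S)]
    (π₁ π₂ : (Fin N → ℝ) → (Fin N → ℝ))
    (hπ₁ : ∀ ρ n, π₁ ρ n = if n ∈ S then ρ n else 0)
    (β γ₁ γ₂ : ℝ) (hβ : β = 1) (hγ₂ : γ₂ = β⁻¹) (hγ₁ : γ₁ = -β⁻¹)
    (f₁ f₂ : (Fin N → ℝ) → (Fin N → ℝ))
    (hf₁ : ∀ ρ, f₁ ρ = (1 + γ₁) • π₁ ρ - γ₁ • ρ)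
    (hf₂ : ∀ ρ, f₂ ρ = (1 + γ₂) • π₂ ρ - γ₂ • ρ)
    (D : (Fin N → ℝ) → (Fin N → ℝ))
    (hD : ∀ ρ, D ρ = ρ + β • (π₁ (f₂ ρ) - π₂ (f₁ ρ))) :
    ∀ ρ : Fin N → ℝ, ∀ n : Fin N,
      D ρ n = if n ∈ S then π₂ ρ n else ρ n - π₂ ρ n := by
  subst hβ hγ₂ hγ₁
  intro ρ n
  have hf₁ρ : f₁ ρ = ρ := by rw [hf₁, inv_one, relaxation_neg_one]
  have hf₂ρ : f₂ ρ = (2 : ℝ) • π₂ ρ - ρ := by rw [hf₂, inv_one, relaxation_one]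
  have hDρ : D ρ = ρ + π₁ ((2 : ℝ) • π₂ ρ - ρ) - π₂ ρ := by
    rw [hD, hf₁ρ, hf₂ρ, one_smul, add_sub_assoc]
  rw [hDρ, add_supportProj_reflection_sub_apply S π₁ hπ₁]
end

section
/- Let d ≥ 1, σ > 0, r₀ ∈ ℝ^d, and define the point spread function g(r) = (8/(πσ))^{d/4} · exp(−2‖r‖²/σ) and the single Gaussian atom ρ⁽¹⁾(r) = (2/(πσ))^{d/4} · exp(−‖r − r₀‖²/σ). Then ρ⁽¹⁾ satisfies Sayre's equation exactly in the continuum: for every r ∈ ℝ^d, ∫_{ℝ^d} g(r − s) · (ρ⁽¹⁾(s))² ds = ρ⁽¹⁾(r). -/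
/-!
Completing the square around the midpoint `m` of `r` and `r₀` (Apollonius' theorem) writes
`g (r - s) * ρ₁ s ^ 2` as `exp (-‖r - r₀‖² / σ)` times a Gaussian of variance parameter `σ / 4`
centred at `m`. That Gaussian integrates to `(π σ / 4) ^ (d / 2)`, which with `c = 2 / (π σ)`
is `(2 c)⁻¹ ^ (d / 2)` and exactly cancels the surplus `(4 c) ^ (d / 4) * c ^ (d / 4)` of the
normalising constants.
-/

open MeasureTheory Real

section

variable {E : Type*} [NormedAddCommGroup E] [InnerProductSpace ℝ E]

theorem norm_sub_sq_add_norm_sub_sq_eq_midpoint (x y s : E) :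
    ‖x - s‖ ^ 2 + ‖s - y‖ ^ 2 = ‖x - y‖ ^ 2 / 2 + 2 * ‖s - midpoint ℝ x y‖ ^ 2 := by
  have := EuclideanGeometry.dist_sq_add_dist_sq_eq_two_mul_dist_midpoint_sq_add_half_dist_sq s x y
  simp only [dist_eq_norm] at this
  rw [norm_sub_rev x s, this]
  ring

theorem exp_mul_exp_sq_eq_exp_mul_exp_midpoint (σ : ℝ) (x y s : E) :
    exp (-2 * ‖x - s‖ ^ 2 / σ) * exp (-‖s - y‖ ^ 2 / σ) ^ 2
      = exp (-‖x - y‖ ^ 2 / σ) * exp (-(4 / σ) * ‖s - midpoint ℝ x y‖ ^ 2) := by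
  rw [← exp_nat_mul, ← exp_add, ← exp_add]
  congr 1
  linear_combination (-2 / σ) * norm_sub_sq_add_norm_sub_sq_eq_midpoint x y s

variable [FiniteDimensional ℝ E] [MeasurableSpace E] [BorelSpace E]

theorem integral_exp_neg_mul_norm_sub_sq {b : ℝ} (hb : 0 < b) (m : E) :
    ∫ x : E, exp (-b * ‖x - m‖ ^ 2) = (π / b) ^ (Module.finrank ℝ E / 2 : ℝ) := by
  rw [integral_sub_right_eq_self (fun v : E ↦ exp (-b * ‖v‖ ^ 2)) m,
    GaussianFourier.integral_rexp_neg_mul_sq_norm hb]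

end

theorem rpow_mul_rpow_sq_mul_rpow_eq {c : ℝ} (hc : 0 < c) (t : ℝ) :
    (4 * c) ^ t * (c ^ t) ^ 2 * (2 * c)⁻¹ ^ (2 * t) = c ^ t := by
  rw [rpow_mul (by positivity), rpow_two, sq, ← mul_rpow (by positivity) hc.le,
    ← mul_rpow (by positivity) (by positivity), ← mul_rpow (by positivity) (by positivity)]
  congr 1
  field_simp
  ring

theorem gaussian_atom_satisfies_sayre_equation_general
    (d : ℕ) (σ : ℝ) (hσ : 0 < σ)
    (r₀ : EuclideanSpace ℝ (Fin d))
    (g ρ₁ : EuclideanSpace ℝ (Fin d) → ℝ)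
    (hg : ∀ r, g r = (8 / (Real.pi * σ)) ^ ((d : ℝ) / 4) * Real.exp (-2 * ‖r‖ ^ 2 / σ))
    (hρ₁ : ∀ r, ρ₁ r = (2 / (Real.pi * σ)) ^ ((d : ℝ) / 4) * Real.exp (-‖r - r₀‖ ^ 2 / σ)) :
    ∀ r : EuclideanSpace ℝ (Fin d),
      ∫ s : EuclideanSpace ℝ (Fin d), g (r - s) * (ρ₁ s) ^ 2 = ρ₁ r := by
  intro r
  set c : ℝ := 2 / (π * σ)
  have hc : 0 < c := by positivity
  have h8 : 8 / (π * σ) = 4 * c := by ring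
  have hwidth : π / (4 / σ) = (2 * c)⁻¹ := by
    simp only [c]
    field_simp
    ring
  have hintegrand : ∀ s, g (r - s) * ρ₁ s ^ 2 = (4 * c) ^ ((d : ℝ) / 4) * (c ^ ((d : ℝ) / 4)) ^ 2
      * exp (-‖r - r₀‖ ^ 2 / σ) * exp (-(4 / σ) * ‖s - midpoint ℝ r r₀‖ ^ 2) := fun s ↦ by
    rw [hg, hρ₁, h8]
    linear_combination (4 * c) ^ ((d : ℝ) / 4) * (c ^ ((d : ℝ) / 4)) ^ 2 *
      exp_mul_exp_sq_eq_exp_mul_exp_midpoint σ r r₀ s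
  simp_rw [hintegrand]
  rw [integral_const_mul, integral_exp_neg_mul_norm_sub_sq (by positivity), finrank_euclideanSpace,
    Fintype.card_fin, hwidth, hρ₁, show (d : ℝ) / 2 = 2 * ((d : ℝ) / 4) by ring]
  linear_combination exp (-‖r - r₀‖ ^ 2 / σ) * rpow_mul_rpow_sq_mul_rpow_eq hc ((d : ℝ) / 4)

/-- A single Gaussian atom satisfies Sayre's equation exactly in the continuum:
`g ∗ (ρ⁽¹⁾)² = ρ⁽¹⁾` on `ℝ^d`. -/
theorem gaussian_atom_satisfies_sayre_equation
    (d : ℕ) (hd : 1 ≤ d) (σ : ℝ) (hσ : 0 < σ)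
    (r₀ : EuclideanSpace ℝ (Fin d))
    (g ρ₁ : EuclideanSpace ℝ (Fin d) → ℝ)
    (hg : ∀ r, g r = (8 / (Real.pi * σ)) ^ ((d : ℝ) / 4) * Real.exp (-2 * ‖r‖ ^ 2 / σ))
    (hρ₁ : ∀ r, ρ₁ r = (2 / (Real.pi * σ)) ^ ((d : ℝ) / 4) * Real.exp (-‖r - r₀‖ ^ 2 / σ)) :
    ∀ r : EuclideanSpace ℝ (Fin d),
      ∫ s : EuclideanSpace ℝ (Fin d), g (r - s) * (ρ₁ s) ^ 2 = ρ₁ r :=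
  gaussian_atom_satisfies_sayre_equation_general d σ hσ r₀ g ρ₁ hg hρ₁
end
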